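/- The metric g = (dt² − dx² − cos²(x)dy² − sin²(x)dz²)/(j·cos²(t)) on the appropriate domain (where cos(t) ≠ 0), with j > 0 a constant, has Einstein tensor equal to 3j times the metric g (i.e., it is a de Sitter metric of constant curvature). -/
import Mathlib


open Real Finset

/-- Partial derivative of a function on ℝ⁴ in the `i`-th coordinate direction. -/
noncomputable def pd (i : Fin 4) (f : (Fin 4 → ℝ) → ℝ) (x : Fin 4 → ℝ) : ℝ :=
  deriv (fun t => f (Function.update x i t)) (x i)

/-- Christoffel symbols `Γ^k_{ij}` of a metric `g`. -/
noncomputable def christoffel (g : (Fin 4 → ℝ) → Matrix (Fin 4) (Fin 4) ℝ)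
    (x : Fin 4 → ℝ) (k i j : Fin 4) : ℝ :=
  (1 / 2) * ∑ l, (g x)⁻¹ k l *
    (pd i (fun y => g y l j) x + pd j (fun y => g y l i) x - pd l (fun y => g y i j) x)

/-- Riemann curvature tensor `R^ρ_{σμν}`. -/
noncomputable def riemann (g : (Fin 4 → ℝ) → Matrix (Fin 4) (Fin 4) ℝ)
    (x : Fin 4 → ℝ) (ρ σ μ ν : Fin 4) : ℝ :=
  pd μ (fun y => christoffel g y ρ ν σ) x - pd ν (fun y => christoffel g y ρ μ σ) x
    + ∑ l, (christoffel g x ρ μ l * christoffel g x l ν σ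
        - christoffel g x ρ ν l * christoffel g x l μ σ)

/-- Ricci tensor `R_{σν} = R^ρ_{σρν}`. -/
noncomputable def ricci (g : (Fin 4 → ℝ) → Matrix (Fin 4) (Fin 4) ℝ)
    (x : Fin 4 → ℝ) (σ ν : Fin 4) : ℝ :=
  ∑ ρ, riemann g x ρ σ ρ ν

/-- Scalar curvature. -/
noncomputable def scalarCurv (g : (Fin 4 → ℝ) → Matrix (Fin 4) (Fin 4) ℝ)
    (x : Fin 4 → ℝ) : ℝ :=
  ∑ μ, ∑ ν, (g x)⁻¹ μ ν * ricci g x μ ν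

/-- Einstein tensor `G = Ric − (1/2)·Scal·g`. -/
noncomputable def einstein (g : (Fin 4 → ℝ) → Matrix (Fin 4) (Fin 4) ℝ)
    (x : Fin 4 → ℝ) (μ ν : Fin 4) : ℝ :=
  ricci g x μ ν - (1 / 2) * scalarCurv g x * g x μ ν

/-- The Einstein cylinder metric `dt² − dx² − cos²(x)dy² − sin²(x)dz²`. -/
noncomputable def cylinderMetric (x : Fin 4 → ℝ) : Matrix (Fin 4) (Fin 4) ℝ :=
  Matrix.diagonal ![1, -1, -(Real.cos (x 1)) ^ 2, -(Real.sin (x 1)) ^ 2]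

/-- The de Sitter metric `(dt² − dx² − cos²(x)dy² − sin²(x)dz²)/(j·cos²(t))`. -/
noncomputable def deSitterMetric (j : ℝ) (x : Fin 4 → ℝ) : Matrix (Fin 4) (Fin 4) ℝ :=
  (j * (Real.cos (x 0)) ^ 2)⁻¹ • cylinderMetric x

/-! ### Auxiliary machinery -/

private lemma sinp2 (a : ℝ) : sin a ^ 2 = 1 - cos a ^ 2 := Real.sin_sq a
private lemma sinp3 (a : ℝ) : sin a ^ 3 = (1 - cos a ^ 2) * sin a := by
  rw [pow_succ, Real.sin_sq]
private lemma sinp4 (a : ℝ) : sin a ^ 4 = (1 - cos a ^ 2) ^ 2 := by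
  rw [show (4 : ℕ) = 2 * 2 from rfl, pow_mul, Real.sin_sq]
private lemma sinp5 (a : ℝ) : sin a ^ 5 = (1 - cos a ^ 2) ^ 2 * sin a := by
  rw [pow_succ, sinp4]
private lemma sinp6 (a : ℝ) : sin a ^ 6 = (1 - cos a ^ 2) ^ 3 := by
  rw [show (6 : ℕ) = 2 * 3 from rfl, pow_mul, Real.sin_sq]

/-- Explicit inverse of the de Sitter metric. -/
noncomputable def ginv (j : ℝ) (x : Fin 4 → ℝ) : Matrix (Fin 4) (Fin 4) ℝ :=
  Matrix.diagonal ![j * cos (x 0) ^ 2, -(j * cos (x 0) ^ 2),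
    -(j * cos (x 0) ^ 2) / cos (x 1) ^ 2, -(j * cos (x 0) ^ 2) / sin (x 1) ^ 2]

lemma ginv_eq (j : ℝ) (x : Fin 4 → ℝ) (hj : j ≠ 0) (ht : cos (x 0) ≠ 0)
    (hs : sin (x 1) ≠ 0) (hc : cos (x 1) ≠ 0) :
    (deSitterMetric j x)⁻¹ = ginv j x := by
  apply Matrix.inv_eq_right_inv
  ext i k
  simp [deSitterMetric, cylinderMetric, ginv, Matrix.mul_apply, Matrix.diagonal, Matrix.one_apply,
    Fin.sum_univ_four]
  fin_cases i <;> fin_cases k <;> simp <;> field_simp <;> ring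

/-- Explicit Christoffel symbols table, indexed `k i j`. -/
noncomputable def Gam (y : Fin 4 → ℝ) : Fin 4 → Fin 4 → Fin 4 → ℝ :=
  let T := sin (y 0) / cos (y 0); let s := sin (y 1); let c := cos (y 1)
  ![![![T, 0, 0, 0], ![0, T, 0, 0], ![0, 0, T * c ^ 2, 0], ![0, 0, 0, T * s ^ 2]],
    ![![0, T, 0, 0], ![T, 0, 0, 0], ![0, 0, s * c, 0], ![0, 0, 0, -(s * c)]],
    ![![0, 0, T, 0], ![0, 0, -(s / c), 0], ![T, -(s / c), 0, 0], ![0, 0, 0, 0]],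
    ![![0, 0, 0, T], ![0, 0, 0, c / s], ![0, 0, 0, 0], ![T, c / s, 0, 0]]]

set_option maxHeartbeats 2000000 in
lemma christoffel_eq (j : ℝ) (y : Fin 4 → ℝ) (hj : j ≠ 0) (ht : cos (y 0) ≠ 0)
    (hs : sin (y 1) ≠ 0) (hc : cos (y 1) ≠ 0) (k i l : Fin 4) :
    christoffel (deSitterMetric j) y k i l = Gam y k i l := by
  rw [christoffel, ginv_eq j y hj ht hs hc]
  fin_cases k <;> fin_cases i <;> fin_cases l <;>
    · simp [Fin.sum_univ_four, ginv, pd, deSitterMetric, cylinderMetric, Function.update,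
        Matrix.diagonal, Gam, Matrix.vecHead, Matrix.vecTail, hj, ht, hs, hc]
      try field_simp
      try ring

/-- Partial derivatives of the Christoffel symbols, indexed `μ k i j`. -/
noncomputable def dGam (x : Fin 4 → ℝ) : Fin 4 → Fin 4 → Fin 4 → Fin 4 → ℝ :=
  let T := sin (x 0) / cos (x 0); let P := 1 / cos (x 0) ^ 2
  let s := sin (x 1); let c := cos (x 1)
  ![![![![P, 0, 0, 0], ![0, P, 0, 0], ![0, 0, P * c ^ 2, 0], ![0, 0, 0, P * s ^ 2]],
      ![![0, P, 0, 0], ![P, 0, 0, 0], ![0, 0, 0, 0], ![0, 0, 0, 0]],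
      ![![0, 0, P, 0], ![0, 0, 0, 0], ![P, 0, 0, 0], ![0, 0, 0, 0]],
      ![![0, 0, 0, P], ![0, 0, 0, 0], ![0, 0, 0, 0], ![P, 0, 0, 0]]],
    ![![![0, 0, 0, 0], ![0, 0, 0, 0], ![0, 0, -(2 * T * s * c), 0],
        ![0, 0, 0, 2 * T * s * c]],
      ![![0, 0, 0, 0], ![0, 0, 0, 0], ![0, 0, c ^ 2 - s ^ 2, 0],
        ![0, 0, 0, -(c ^ 2 - s ^ 2)]],
      ![![0, 0, 0, 0], ![0, 0, -(1 / c ^ 2), 0], ![0, -(1 / c ^ 2), 0, 0], ![0, 0, 0, 0]],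
      ![![0, 0, 0, 0], ![0, 0, 0, -(1 / s ^ 2)], ![0, 0, 0, 0], ![0, -(1 / s ^ 2), 0, 0]]],
    (fun _ _ _ => 0), (fun _ _ _ => 0)]

set_option maxHeartbeats 4000000 in
lemma pdGam (x : Fin 4 → ℝ) (ht : cos (x 0) ≠ 0) (hs : sin (x 1) ≠ 0)
    (hc : cos (x 1) ≠ 0) (μ k i l : Fin 4) :
    pd μ (fun y => Gam y k i l) x = dGam x μ k i l := by
  fin_cases μ <;> fin_cases k <;> fin_cases i <;> fin_cases l <;>
    · simp [pd, Gam, dGam, Function.update, Matrix.vecHead, Matrix.vecTail, ht, hs, hc]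
      try field_simp
      try ring_nf
      try simp only [sinp2, sinp3, sinp4, sinp5, sinp6]
      try ring

lemma pd_christoffel (j : ℝ) (x : Fin 4 → ℝ) (hj : j ≠ 0) (ht : cos (x 0) ≠ 0)
    (hs : sin (x 1) ≠ 0) (hc : cos (x 1) ≠ 0) (μ k i l : Fin 4) :
    pd μ (fun y => christoffel (deSitterMetric j) y k i l) x = dGam x μ k i l := by
  have hU : IsOpen {y : Fin 4 → ℝ | cos (y 0) ≠ 0 ∧ sin (y 1) ≠ 0 ∧ cos (y 1) ≠ 0} := by
    refine ((isOpen_compl_singleton.preimage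
        (Real.continuous_cos.comp (continuous_apply 0))).inter
      (((isOpen_compl_singleton.preimage
        (Real.continuous_sin.comp (continuous_apply 1)))).inter
      ((isOpen_compl_singleton.preimage
        (Real.continuous_cos.comp (continuous_apply 1))))))
  have hcont : Continuous (fun s : ℝ => Function.update x μ s) :=
    continuous_const.update μ continuous_id
  have hx : Function.update x μ (x μ) ∈
      {y : Fin 4 → ℝ | cos (y 0) ≠ 0 ∧ sin (y 1) ≠ 0 ∧ cos (y 1) ≠ 0} := by
    rw [Function.update_eq_self]; exact ⟨ht, hs, hc⟩
  have hev : ∀ᶠ s in nhds (x μ), Function.update x μ s ∈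
      {y : Fin 4 → ℝ | cos (y 0) ≠ 0 ∧ sin (y 1) ≠ 0 ∧ cos (y 1) ≠ 0} :=
    hcont.continuousAt.preimage_mem_nhds (hU.mem_nhds hx)
  have heq : (fun s => christoffel (deSitterMetric j) (Function.update x μ s) k i l)
      =ᶠ[nhds (x μ)] fun s => Gam (Function.update x μ s) k i l :=
    hev.mono fun s hsmem => christoffel_eq j _ hj hsmem.1 hsmem.2.1 hsmem.2.2 k i l
  rw [pd, heq.deriv_eq]
  exact pdGam x ht hs hc μ k i l

set_option maxHeartbeats 4000000 in
lemma ricci_eq (j : ℝ) (x : Fin 4 → ℝ) (hj : j ≠ 0) (ht : cos (x 0) ≠ 0)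
    (hs : sin (x 1) ≠ 0) (hc : cos (x 1) ≠ 0) (σ ν : Fin 4) :
    ricci (deSitterMetric j) x σ ν = -3 * j * deSitterMetric j x σ ν := by
  simp only [ricci, riemann, Fin.sum_univ_four,
    pd_christoffel j x hj ht hs hc, christoffel_eq j x hj ht hs hc]
  fin_cases σ <;> fin_cases ν <;>
    · simp [Gam, dGam, deSitterMetric, cylinderMetric, Matrix.diagonal,
        Matrix.vecHead, Matrix.vecTail]
      try field_simp
      try ring_nf
      try simp only [sinp2, sinp3, sinp4, sinp5, sinp6]
      try ring

lemma scalar_eq (j : ℝ) (x : Fin 4 → ℝ) (hj : j ≠ 0) (ht : cos (x 0) ≠ 0)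
    (hs : sin (x 1) ≠ 0) (hc : cos (x 1) ≠ 0) :
    scalarCurv (deSitterMetric j) x = -12 * j := by
  simp only [scalarCurv, Fin.sum_univ_four, ricci_eq j x hj ht hs hc,
    ginv_eq j x hj ht hs hc]
  simp [ginv, deSitterMetric, cylinderMetric, Matrix.diagonal, Matrix.vecHead, Matrix.vecTail]
  field_simp
  ring

/-- The metric `g = (dt² − dx² − cos²(x)dy² − sin²(x)dz²)/(j·cos²(t))`, `j > 0`,
has Einstein tensor equal to `3j` times the metric: it is a de Sitter metric of
constant curvature. -/
theorem stmt10 (j : ℝ) (hj : 0 < j) (x : Fin 4 → ℝ)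
    (hx : x 1 ∈ Set.Ioo 0 (π / 2)) (ht : Real.cos (x 0) ≠ 0) :
    ∀ μ ν, einstein (deSitterMetric j) x μ ν = 3 * j * deSitterMetric j x μ ν := by
  have hj' : j ≠ 0 := ne_of_gt hj
  have hs : sin (x 1) ≠ 0 :=
    ne_of_gt (Real.sin_pos_of_pos_of_lt_pi hx.1 (lt_trans hx.2 (by linarith [Real.pi_pos])))
  have hc : cos (x 1) ≠ 0 :=
    ne_of_gt (Real.cos_pos_of_mem_Ioo ⟨by linarith [Real.pi_pos, hx.1], hx.2⟩)
  intro μ ν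
  rw [einstein, ricci_eq j x hj' ht hs hc, scalar_eq j x hj' ht hs hc]
  ring
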